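/- Let (k_n)_{n≥1} be an increasing sequence of positive integers with k_n ≤ n for all n and k_n → ∞, and let M_n be the index maximizing p ↦ p^n/(p!·2^p) on {1,…,n}. Assume k_n ≤ M_n for all large enough n. Then B_{n,k_{n+1}}/B_{n+1,k_{n+1}} = Θ(1/k_{n+1}) as n → ∞; that is, there exist constants c, C > 0 and N such that for all n ≥ N: c/k_{n+1} ≤ B_{n,k_{n+1}}/B_{n+1,k_{n+1}} ≤ C/k_{n+1}. -/

import Mathlib

open Filter

namespace CatalanSat

/-- A logical connective: `and` or `or`. -/
inductive Conn : Type
  | and : Conn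
  | or : Conn

/-- An and/or tree: a binary plane tree with internal nodes labelled by a
connective and leaves labelled by a literal `(v, b)`: variable `v`, positive
if `b = true`, negated if `b = false`. -/
inductive AOTree : Type
  | leaf (v : ℕ) (b : Bool) : AOTree
  | node (c : Conn) (l r : AOTree) : AOTree

namespace AOTree

/-- The list of leaf labels (variable index, polarity), from left to right. -/
def leaves : AOTree → List (ℕ × Bool)
  | .leaf v b => [(v, b)]
  | .node _ l r => leaves l ++ leaves r

/-- The size of an and/or tree is its number of leaves. -/
def size (t : AOTree) : ℕ := t.leaves.length

/-- The number of distinct variables appearing as leaf labels. -/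
def varCount (t : AOTree) : ℕ := (t.leaves.map Prod.fst).toFinset.card

/-- The Boolean function computed by an and/or tree. -/
def eval : AOTree → (ℕ → Bool) → Bool
  | .leaf v b, x => if b then x v else !(x v)
  | .node .and l r, x => eval l x && eval r x
  | .node .or l r, x => eval l x || eval r x

end AOTree

/-- A tree-structure: a binary plane tree with internal nodes labelled by a
connective and unlabelled leaves. -/
inductive Shape : Type
  | leaf : Shape
  | node (c : Conn) (l r : Shape) : Shape

/-- The size of a tree-structure is its number of leaves. -/
def Shape.size : Shape → ℕ
  | .leaf => 1
  | .node _ l r => Shape.size l + Shape.size r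

/-- The tree-structure of an and/or tree (forget the leaf labels). -/
def AOTree.shape : AOTree → Shape
  | .leaf _ _ => .leaf
  | .node c l r => .node c l.shape r.shape

/-- The label of the `i`-th leaf (junk default when out of range). -/
def lv (t : AOTree) (i : ℕ) : ℕ × Bool := t.leaves.getD i (0, true)

/-- Two and/or trees are equivalent when they have the same tree-structure,
two leaves are labelled by the same variable in one iff they are in the other,
and two leaves are labelled by the same literal in one iff they are in the other. -/
def TreeEquiv (A B : AOTree) : Prop :=
  A.shape = B.shape ∧
  ∀ i j : ℕ, i < A.leaves.length → j < A.leaves.length →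
    (((lv A i).1 = (lv A j).1) ↔ ((lv B i).1 = (lv B j).1)) ∧
    ((lv A i = lv A j) ↔ (lv B i = lv B j))

/-- The equivalence relation on Boolean functions induced by equivalence of trees. -/
def FunEquiv (f g : (ℕ → Bool) → Bool) : Prop :=
  ∃ A B : AOTree, TreeEquiv A B ∧ A.eval = f ∧ B.eval = g

/-- The number of equivalence classes of and/or trees satisfying a property
(the property being assumed invariant under equivalence). -/
noncomputable def classCount (P : AOTree → Prop) : ℕ :=
  Nat.card (Quot (fun A B : {t : AOTree // P t} => TreeEquiv A.1 B.1))

/-- `Tcount n K`: number of equivalence classes of and/or trees of size `n`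
using at most `K` distinct variables. -/
noncomputable def Tcount (n K : ℕ) : ℕ := classCount fun t => t.size = n ∧ t.varCount ≤ K

/-- Number of such classes computing a function of the class `⟨f⟩`. -/
noncomputable def TcountClass (n K : ℕ) (f : (ℕ → Bool) → Bool) : ℕ :=
  classCount fun t => t.size = n ∧ t.varCount ≤ K ∧ FunEquiv t.eval f

/-- `P_n⟨f⟩`: the probability that a uniform equivalence class of trees of size
`n` (at most `K` variables) computes a function of `⟨f⟩`. -/
noncomputable def Pclass (n K : ℕ) (f : (ℕ → Bool) → Bool) : ℝ :=
  (TcountClass n K f : ℝ) / (Tcount n K : ℝ)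

/-- Number of classes of size `n`, at most `K` variables, computing exactly `f`. -/
noncomputable def TcountEval (n K : ℕ) (f : (ℕ → Bool) → Bool) : ℕ :=
  classCount fun t => t.size = n ∧ t.varCount ≤ K ∧ t.eval = f

/-- Stirling numbers of the second kind. -/
def stirling : ℕ → ℕ → ℕ
  | 0, 0 => 1
  | 0, _ + 1 => 0
  | _ + 1, 0 => 0
  | n + 1, k + 1 => (k + 1) * stirling n (k + 1) + stirling n k

/-- `B n k = Σ_{p=1}^{k} S(n,p)·2^{−p}`. -/
noncomputable def B (n k : ℕ) : ℝ :=
  ∑ p ∈ Finset.Icc 1 k, (stirling n p : ℝ) / 2 ^ p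

/-- `a n p = p^n/(p!·2^p)`. -/
noncomputable def a (n p : ℕ) : ℝ :=
  (p : ℝ) ^ n / ((Nat.factorial p : ℝ) * 2 ^ p)

/-- `rat_n = B_{n−1,k_n}/B_{n,k_n}`. -/
noncomputable def rat (k : ℕ → ℕ) (n : ℕ) : ℝ := B (n - 1) (k n) / B n (k n)

/-- The complexity `L(f)`: minimal size of an and/or tree computing `f`. -/
noncomputable def complexity (f : (ℕ → Bool) → Bool) : ℕ :=
  sInf {m | ∃ t : AOTree, t.size = m ∧ t.eval = f}

/-- The variable `x_i` is essential for `f`. -/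
def Essential (i : ℕ) (f : (ℕ → Bool) → Bool) : Prop :=
  ∃ x : ℕ → Bool, f (Function.update x i false) ≠ f (Function.update x i true)

/-- `E(f)`: the number of essential variables of `f`. -/
noncomputable def essCount (f : (ℕ → Bool) → Bool) : ℕ :=
  Nat.card {i : ℕ // Essential i f}

/-- The multiplicity `R⟨f⟩ = L⟨f⟩ − E⟨f⟩`. -/
noncomputable def mult (f : (ℕ → Bool) → Bool) : ℕ := complexity f - essCount f

/-- `M` is, for each `n ≥ 1`, an index of `{1,…,n}` maximizing `p ↦ p^n/(p!·2^p)`. -/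
def IsArgmax (M : ℕ → ℕ) : Prop :=
  ∀ n, 1 ≤ n → M n ∈ Finset.Icc 1 n ∧ ∀ p ∈ Finset.Icc 1 n, a n p ≤ a n (M n)

/-- There is a leaf labelled by the given literal linked to the root by
`∨`-labelled internal nodes only. -/
def orLeaf : AOTree → ℕ × Bool → Prop
  | .leaf v b, l => (v, b) = l
  | .node .or A B, l => orLeaf A l ∨ orLeaf B l
  | .node .and _ _, _ => False

/-- There is a leaf labelled by the given literal linked to the root by
`∧`-labelled internal nodes only. -/
def andLeaf : AOTree → ℕ × Bool → Prop
  | .leaf v b, l => (v, b) = l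
  | .node .and A B, l => andLeaf A l ∨ andLeaf B l
  | .node .or _ _, _ => False

/-- A simple tautology: two leaves labelled by a variable and its negation,
both linked to the root through `∨`-connectives only. -/
def IsSimpleTautology (t : AOTree) : Prop :=
  ∃ v b, orLeaf t (v, b) ∧ orLeaf t (v, !b)

/-- A simple contradiction: the dual notion. -/
def IsSimpleContradiction (t : AOTree) : Prop :=
  ∃ v b, andLeaf t (v, b) ∧ andLeaf t (v, !b)

/-- A tautology: a tree computing the constant function `true`. -/
def IsTautology (t : AOTree) : Prop := ∀ x : ℕ → Bool, t.eval x = true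

/-- A simple-x of type T: one subtree of the root is a single leaf, the other
is a simple tautology if the root is `∧`, a simple contradiction if it is `∨`. -/
def IsSimpleXT (t : AOTree) : Prop :=
  (∃ v b s, (t = .node .and (.leaf v b) s ∨ t = .node .and s (.leaf v b)) ∧
    IsSimpleTautology s) ∨
  (∃ v b s, (t = .node .or (.leaf v b) s ∨ t = .node .or s (.leaf v b)) ∧
    IsSimpleContradiction s)

/-- A simple-x of type X: one subtree of the root is a single leaf `ℓ`, the root
is `∧` (resp. `∨`), and the other subtree has a leaf labelled by the literal of
`ℓ` linked to its root by `∨`-only (resp. `∧`-only) internal nodes. -/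
def IsSimpleXX (t : AOTree) : Prop :=
  (∃ v b s, (t = .node .and (.leaf v b) s ∨ t = .node .and s (.leaf v b)) ∧
    orLeaf s (v, b)) ∨
  (∃ v b s, (t = .node .or (.leaf v b) s ∨ t = .node .or s (.leaf v b)) ∧
    andLeaf s (v, b))

private lemma stirling_succ_succ (n j : ℕ) :
    stirling (n+1) (j+1) = (j+1) * stirling n (j+1) + stirling n j := rfl

private lemma stirling_zero : ∀ n, 1 ≤ n → stirling n 0 = 0
  | _+1, _ => rfl

private lemma stirling_one : ∀ n, 1 ≤ n → stirling n 1 = 1 := by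
  intro n hn
  induction n with
  | zero => omega
  | succ m ih =>
    rw [stirling_succ_succ m 0]
    cases m with
    | zero => rfl
    | succ l => rw [ih (by omega), stirling_zero _ (by omega)]

private lemma stirling_eq_zero : ∀ n p, n < p → stirling n p = 0 := by
  intro n
  induction n with
  | zero => intro p hp; cases p with
    | zero => omega
    | succ q => rfl
  | succ m ih =>
    intro p hp
    cases p with
    | zero => omega
    | succ q => rw [stirling_succ_succ, ih (q+1) (by omega), ih q (by omega)]; ring

private lemma sum_desc (p : ℕ) : ∀ n, ∑ j ∈ Finset.range (n+2), p.descFactorial j * stirling n j = p ^ n := by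
  intro n
  induction n with
  | zero =>
    rw [Finset.sum_range_succ, Finset.sum_range_succ, Finset.sum_range_zero]
    simp [stirling]
  | succ m ih =>
    rw [Finset.sum_range_succ']
    have h0 : p.descFactorial 0 * stirling (m+1) 0 = 0 := by rw [stirling_zero _ (by omega)]; ring
    rw [h0, add_zero]
    have hterm : ∀ j, p.descFactorial (j+1) * stirling (m+1) (j+1)
        = (j+1) * p.descFactorial (j+1) * stirling m (j+1) + (p-j) * p.descFactorial j * stirling m j := by
      intro j
      rw [stirling_succ_succ, Nat.descFactorial_succ]
      ring
    rw [Finset.sum_congr rfl (fun j _ => hterm j), Finset.sum_add_distrib]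
    have h1 : ∑ j ∈ Finset.range (m+2), (j+1) * p.descFactorial (j+1) * stirling m (j+1)
        = ∑ j ∈ Finset.range (m+2), j * p.descFactorial j * stirling m j := by
      have := Finset.sum_range_succ' (fun i => i * p.descFactorial i * stirling m i) (m+2)
      simp only [Nat.zero_mul, Nat.mul_zero, zero_mul] at this
      rw [add_zero] at this
      rw [← this, Finset.sum_range_succ, stirling_eq_zero m (m+2) (by omega)]
      ring
    rw [h1, ← Finset.sum_add_distrib]
    have h2 : ∀ j ∈ Finset.range (m+2), j * p.descFactorial j * stirling m j + (p-j) * p.descFactorial j * stirling m j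
        = p * (p.descFactorial j * stirling m j) := by
      intro j _
      by_cases hjp : j ≤ p
      · have : j + (p - j) = p := by omega
        rw [← add_mul, ← add_mul, this]; ring
      · rw [Nat.descFactorial_eq_zero_iff_lt.mpr (by omega)]; ring
    rw [Finset.sum_congr rfl h2, ← Finset.mul_sum, ih]
    ring

private lemma stirling_le (n p : ℕ) : p.factorial * stirling n p ≤ p ^ n := by
  by_cases h : p ≤ n + 1
  · rw [← sum_desc p n]
    have := Finset.single_le_sum (f := fun j => p.descFactorial j * stirling n j)
      (fun i _ => Nat.zero_le _) (Finset.mem_range.mpr (by omega : p < n + 2))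
    rwa [Nat.descFactorial_self] at this
  · rw [stirling_eq_zero n p (by omega)]; simp

private lemma stirling_ge (n p : ℕ) (hn : 1 ≤ n) (hp : 1 ≤ p) (hpn : p ≤ n + 1) :
    p ^ n ≤ p.factorial * stirling n p + p * (p-1) ^ n := by
  obtain ⟨q, rfl⟩ : ∃ q, p = q + 1 := ⟨p - 1, by omega⟩
  simp only [Nat.add_sub_cancel]
  rw [← sum_desc (q+1) n, ← sum_desc q n, Finset.mul_sum]
  have hmem : q + 1 ∈ Finset.range (n+2) := Finset.mem_range.mpr (by omega)
  rw [← Finset.add_sum_erase _ _ hmem, Nat.descFactorial_self]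
  gcongr ?_ + ?_
  · exact le_refl _
  · refine le_trans (Finset.sum_le_sum ?_) (Finset.sum_le_sum_of_subset (Finset.erase_subset _ _))
    intro j hj
    have hjne : j ≠ q + 1 := Finset.ne_of_mem_erase hj
    cases j with
    | zero => rw [stirling_zero _ hn]; simp
    | succ i =>
      by_cases hiq : i < q
      · rw [Nat.succ_descFactorial_succ]
        have h1 : q.descFactorial i ≤ q.descFactorial (i+1) := by
          rw [Nat.descFactorial_succ]
          exact Nat.le_mul_of_pos_left _ (by omega)
        calc (q+1) * q.descFactorial i * stirling n (i+1)
            ≤ (q+1) * q.descFactorial (i+1) * stirling n (i+1) :=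
              Nat.mul_le_mul_right _ (Nat.mul_le_mul_left _ h1)
          _ = (q+1) * (q.descFactorial (i+1) * stirling n (i+1)) := by ring
      · rw [Nat.descFactorial_eq_zero_iff_lt.mpr (by omega)]
        simp



private lemma a_pos (m p : ℕ) (hp : 1 ≤ p) : 0 < a m p := by
  have : (0:ℝ) < p := by exact_mod_cast hp
  unfold a
  positivity

private lemma a_succ_le_iff (m q : ℕ) (hq : 1 ≤ q) :
    a m (q+1) ≤ a m q ↔ ((q:ℝ)+1)^m ≤ 2*((q:ℝ)+1)*(q:ℝ)^m := by
  have hq0 : (0:ℝ) < q := by exact_mod_cast hq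
  have hF : (0:ℝ) < (q.factorial : ℝ) * 2^q := by positivity
  unfold a
  rw [div_le_div_iff₀ (by positivity) (by positivity), Nat.factorial_succ]
  push_cast
  rw [show ((q:ℝ)^m * (((q:ℝ)+1) * (q.factorial:ℝ) * 2^(q+1))) = (2*((q:ℝ)+1)*(q:ℝ)^m) * ((q.factorial:ℝ) * 2^q) from by rw [pow_succ]; ring]
  exact mul_le_mul_iff_of_pos_right hF

private lemma a_le_succ_iff (m q : ℕ) (hq : 1 ≤ q) :
    a m q ≤ a m (q+1) ↔ 2*((q:ℝ)+1)*(q:ℝ)^m ≤ ((q:ℝ)+1)^m := by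
  have hq0 : (0:ℝ) < q := by exact_mod_cast hq
  have hF : (0:ℝ) < (q.factorial : ℝ) * 2^q := by positivity
  unfold a
  rw [div_le_div_iff₀ (by positivity) (by positivity), Nat.factorial_succ]
  push_cast
  rw [show ((q:ℝ)^m * (((q:ℝ)+1) * (q.factorial:ℝ) * 2^(q+1))) = (2*((q:ℝ)+1)*(q:ℝ)^m) * ((q.factorial:ℝ) * 2^q) from by rw [pow_succ]; ring]
  exact mul_le_mul_iff_of_pos_right hF

private lemma a_step_mono (m p q : ℕ) (hp : 1 ≤ p) (hpq : p ≤ q)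
    (h : ((p:ℝ)+1)^m ≤ 2*((p:ℝ)+1)*(p:ℝ)^m) :
    ((q:ℝ)+1)^m ≤ 2*((q:ℝ)+1)*(q:ℝ)^m := by
  have hp0 : (0:ℝ) < p := by exact_mod_cast hp
  have hq0 : (0:ℝ) < q := by exact_mod_cast (hp.trans hpq)
  have hpq' : (p:ℝ) ≤ q := by exact_mod_cast hpq
  have h1 : (((q:ℝ)+1) * p)^m ≤ (((p:ℝ)+1) * q)^m := by
    apply pow_le_pow_left₀ (by positivity)
    nlinarith
  rw [mul_pow, mul_pow] at h1
  have hPm : (0:ℝ) < (p:ℝ)^m := pow_pos hp0 m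
  have hQm : (0:ℝ) ≤ (q:ℝ)^m := le_of_lt (pow_pos hq0 m)
  have h2 : ((q:ℝ)+1)^m * (p:ℝ)^m ≤ (2*((q:ℝ)+1)*(q:ℝ)^m) * (p:ℝ)^m := by
    calc ((q:ℝ)+1)^m * (p:ℝ)^m ≤ ((p:ℝ)+1)^m * (q:ℝ)^m := h1
      _ ≤ (2*((p:ℝ)+1)*(p:ℝ)^m) * (q:ℝ)^m := by
          apply mul_le_mul_of_nonneg_right h hQm
      _ ≤ (2*((q:ℝ)+1)*(q:ℝ)^m) * (p:ℝ)^m := by nlinarith [mul_nonneg (sub_nonneg.mpr hpq') (mul_nonneg hPm.le hQm)]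
  exact le_of_mul_le_mul_right h2 hPm

private lemma argmax_incr (M : ℕ → ℕ) (hM : IsArgmax M) (m p : ℕ) (hm : 1 ≤ m)
    (hp : 1 ≤ p) (hpM : p + 1 ≤ M m) : a m p ≤ a m (p+1) := by
  by_contra hcon
  push_neg at hcon
  have hMm := hM m hm
  have hMle : M m ≤ m := (Finset.mem_Icc.mp hMm.1).2
  have hD : ((p:ℝ)+1)^m ≤ 2*((p:ℝ)+1)*(p:ℝ)^m := (a_succ_le_iff m p hp).mp hcon.le
  have key : ∀ j, p + 1 + j ≤ M m → a m (p+1+j) ≤ a m (p+1) := by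
    intro j
    induction j with
    | zero => intro _; exact le_refl _
    | succ i ih =>
      intro hle
      have h1 : a m (p+1+i+1) ≤ a m (p+1+i) := by
        refine (a_succ_le_iff m (p+1+i) (by omega)).mpr ?_
        have := a_step_mono m p (p+1+i) hp (by omega) hD
        push_cast at this ⊢
        convert this using 3 <;> push_cast <;> ring
      exact le_trans h1 (ih (by omega))
  have h2 : a m (M m) ≤ a m (p+1) := by
    have := key (M m - (p+1)) (by omega)
    rwa [show p+1+(M m - (p+1)) = M m from by omega] at this
  have h3 : a m p ≤ a m (M m) := hMm.2 p (Finset.mem_Icc.mpr ⟨hp, by omega⟩)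
  linarith



private lemma key_ineq (M : ℕ → ℕ) (hM : IsArgmax M) (n K : ℕ)
    (hK : 2 ≤ K) (hKM : K ≤ M (n+1)) :
    (K:ℝ) * ((K:ℝ)-1)^n ≤ (K:ℝ)^n := by
  obtain ⟨q, rfl⟩ : ∃ q, K = q + 1 := ⟨K - 1, by omega⟩
  have h := argmax_incr M hM (n+1) q (by omega) (by omega) hKM
  rw [a_le_succ_iff _ _ (by omega)] at h
  have hq1 : (1:ℝ) ≤ (q:ℝ) := by exact_mod_cast (by omega : 1 ≤ q)
  push_cast
  rw [add_sub_cancel_right]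
  rw [pow_succ, pow_succ] at h
  have hqn : (0:ℝ) < (q:ℝ)^n := pow_pos (by linarith) n
  have h6 : (2*(q:ℝ)*(q:ℝ)^n) * ((q:ℝ)+1) ≤ ((q:ℝ)+1)^n * ((q:ℝ)+1) := by nlinarith
  have h7 : 2*(q:ℝ)*(q:ℝ)^n ≤ ((q:ℝ)+1)^n :=
    le_of_mul_le_mul_right h6 (by linarith)
  nlinarith

private lemma step_ineq (n K p : ℕ) (hp : 1 ≤ p) (h2p : 2*p + 2 ≤ K)
    (hG : (K:ℝ) * ((K:ℝ)-1)^n ≤ (K:ℝ)^n) :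
    2*(K:ℝ)*((p:ℝ)+1)*(p:ℝ)^n ≤ ((p:ℝ)+1)^n := by
  have hp1 : (1:ℝ) ≤ (p:ℝ) := by exact_mod_cast hp
  have hK4 : (2:ℝ)*(p:ℝ)+2 ≤ (K:ℝ) := by exact_mod_cast h2p
  have hK1 : (1:ℝ) < (K:ℝ) - 1 := by linarith
  have h1 : ((p:ℝ))*((K:ℝ))^2 ≤ ((p:ℝ)+1)*((K:ℝ)-1)^2 := by nlinarith
  have h2 : ((p:ℝ)*(K:ℝ)^2)^n ≤ (((p:ℝ)+1)*((K:ℝ)-1)^2)^n :=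
    pow_le_pow_left₀ (by positivity) h1 n
  rw [mul_pow, mul_pow, ← pow_mul, ← pow_mul, mul_comm 2 n, pow_mul, pow_mul] at h2
  -- h2 : p^n * (K^n)^2 ≤ (p+1)^n * ((K-1)^n)^2
  have hKm1n : (0:ℝ) < ((K:ℝ)-1)^n := pow_pos (by linarith) n
  have h3 : ((K:ℝ)*((K:ℝ)-1)^n)^2 ≤ ((K:ℝ)^n)^2 := by
    apply pow_le_pow_left₀ (by positivity) hG
  have h4 : (p:ℝ)^n * ((K:ℝ)^2 * (((K:ℝ)-1)^n)^2) ≤ ((p:ℝ)+1)^n * (((K:ℝ)-1)^n)^2 := by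
    calc (p:ℝ)^n * ((K:ℝ)^2 * (((K:ℝ)-1)^n)^2)
        = (p:ℝ)^n * ((K:ℝ)*((K:ℝ)-1)^n)^2 := by ring
      _ ≤ (p:ℝ)^n * ((K:ℝ)^n)^2 := by
          apply mul_le_mul_of_nonneg_left h3 (by positivity)
      _ ≤ ((p:ℝ)+1)^n * (((K:ℝ)-1)^n)^2 := h2
  have h5 : (K:ℝ)^2 * (p:ℝ)^n ≤ ((p:ℝ)+1)^n := by
    have := mul_le_mul_of_nonneg_right h4 (le_of_lt (inv_pos.mpr (pow_pos hKm1n 2)))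
    have hne : (((K:ℝ)-1)^n)^2 ≠ 0 := by positivity
    calc (K:ℝ)^2 * (p:ℝ)^n = (p:ℝ)^n * ((K:ℝ)^2 * (((K:ℝ)-1)^n)^2) * ((((K:ℝ)-1)^n)^2)⁻¹ := by
          field_simp
      _ ≤ ((p:ℝ)+1)^n * (((K:ℝ)-1)^n)^2 * ((((K:ℝ)-1)^n)^2)⁻¹ := this
      _ = ((p:ℝ)+1)^n := by field_simp
  have hpn : (0:ℝ) < (p:ℝ)^n := pow_pos (by linarith) n
  have h6 : 2*(K:ℝ)*((p:ℝ)+1) ≤ (K:ℝ)^2 := by nlinarith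
  have h7 := mul_le_mul_of_nonneg_right h6 hpn.le
  linarith

private lemma a_step (n K p : ℕ) (hp : 1 ≤ p) (h2p : 2*p+2 ≤ K)
    (hG : (K:ℝ) * ((K:ℝ)-1)^n ≤ (K:ℝ)^n) :
    (K:ℝ) * a n p ≤ a n (p+1) := by
  have h := step_ineq n K p hp h2p hG
  have hp0 : (0:ℝ) < p := by exact_mod_cast hp
  have hF : (0:ℝ) < (p.factorial : ℝ) * 2^p := by positivity
  unfold a
  rw [← mul_div_assoc, div_le_div_iff₀ (by positivity) (by positivity), Nat.factorial_succ]
  push_cast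
  calc (K:ℝ) * (p:ℝ)^n * (((p:ℝ)+1) * (p.factorial:ℝ) * 2^(p+1))
      = (2*(K:ℝ)*((p:ℝ)+1)*(p:ℝ)^n) * ((p.factorial:ℝ) * 2^p) := by rw [pow_succ]; ring
    _ ≤ ((p:ℝ)+1)^n * ((p.factorial:ℝ) * 2^p) := mul_le_mul_of_nonneg_right h hF.le

private lemma t_le_a (n p : ℕ) (hp : 1 ≤ p) :
    (stirling n p : ℝ) / 2^p ≤ a n p := by
  have hp0 : (0:ℝ) < p := by exact_mod_cast hp
  have h : ((p.factorial : ℝ)) * (stirling n p : ℝ) ≤ (p:ℝ)^n := by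
    exact_mod_cast stirling_le n p
  have hFp : (0:ℝ) < (p.factorial : ℝ) := by positivity
  unfold a
  rw [div_le_div_iff₀ (by positivity) (by positivity)]
  have h2 : (0:ℝ) < (2:ℝ)^p := by positivity
  nlinarith

private lemma t_ge (n m : ℕ) (hn : 1 ≤ n) (hm : 1 ≤ m) (hmn : m ≤ n + 1)
    (h3 : 3 * (m:ℝ) * ((m:ℝ)-1)^n ≤ (m:ℝ)^n) :
    (2/3) * a n m ≤ (stirling n m : ℝ) / 2^m := by
  have hm0 : (0:ℝ) < m := by exact_mod_cast hm
  have h := stirling_ge n m hn hm hmn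
  have hcast : ((m - 1 : ℕ) : ℝ) = (m:ℝ) - 1 := by
    have : (1:ℕ) ≤ m := hm
    push_cast [this]
    ring
  have h' : (m:ℝ)^n ≤ (m.factorial : ℝ) * (stirling n m : ℝ) + (m:ℝ) * ((m:ℝ)-1)^n := by
    have := h
    rw [show (m:ℝ)*((m:ℝ)-1)^n = (m:ℝ)*(((m-1:ℕ)):ℝ)^n from by rw [hcast]]
    exact_mod_cast this
  have hFp : (0:ℝ) < (m.factorial : ℝ) := by positivity
  have h2 : (0:ℝ) < (2:ℝ)^m := by positivity
  have hS : (2/3) * (m:ℝ)^n ≤ (m.factorial : ℝ) * (stirling n m : ℝ) := by linarith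
  unfold a
  rw [← mul_div_assoc, div_le_div_iff₀ (by positivity) (by positivity)]
  nlinarith



private lemma B_eq_range (n K : ℕ) :
    B n K = ∑ j ∈ Finset.range K, (stirling n (j+1) : ℝ) / 2^(j+1) := by
  unfold B
  rw [← Finset.Ico_add_one_right_eq_Icc, Finset.sum_Ico_eq_sum_range]
  exact Finset.sum_congr rfl (fun i _ => by rw [Nat.add_comm])

private lemma B_nonneg (n K : ℕ) : (0:ℝ) ≤ B n K := by
  unfold B
  exact Finset.sum_nonneg (fun i _ => by positivity)

private lemma B_pos (n K : ℕ) (hn : 1 ≤ n) (hK : 1 ≤ K) : (0:ℝ) < B n K := by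
  unfold B
  have h1 : (1:ℕ) ∈ Finset.Icc 1 K := Finset.mem_Icc.mpr ⟨le_refl _, hK⟩
  have hval : (0:ℝ) < (stirling n 1 : ℝ) / 2^1 := by
    rw [stirling_one n hn]; norm_num
  calc (0:ℝ) < (stirling n 1 : ℝ) / 2^1 := hval
    _ ≤ ∑ p ∈ Finset.Icc 1 K, (stirling n p : ℝ) / 2 ^ p :=
      Finset.single_le_sum (f := fun p => (stirling n p : ℝ) / 2^p)
        (fun i _ => by positivity) h1

private lemma B_succ_le (n K : ℕ) (hn : 1 ≤ n) (hK : 1 ≤ K) :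
    B (n+1) K ≤ (3/2) * K * B n K := by
  have hBn := B_nonneg n K
  have hK1 : (1:ℝ) ≤ (K:ℝ) := by exact_mod_cast hK
  obtain ⟨L, rfl⟩ : ∃ L, K = L + 1 := ⟨K - 1, by omega⟩
  rw [B_eq_range, B_eq_range]
  have hsplit : ∀ j, (stirling (n+1) (j+1) : ℝ) / 2^(j+1)
      = ((j:ℝ)+1) * ((stirling n (j+1):ℝ)/2^(j+1)) + (stirling n j : ℝ)/2^(j+1) := by
    intro j
    rw [stirling_succ_succ]
    push_cast
    ring
  rw [Finset.sum_congr rfl (fun j _ => hsplit j), Finset.sum_add_distrib]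
  have h1 : ∑ j ∈ Finset.range (L+1), ((j:ℝ)+1) * ((stirling n (j+1):ℝ)/2^(j+1))
      ≤ ((L:ℝ)+1) * ∑ j ∈ Finset.range (L+1), (stirling n (j+1):ℝ)/2^(j+1) := by
    rw [Finset.mul_sum]
    apply Finset.sum_le_sum
    intro j hj
    have hjL : (j:ℝ) + 1 ≤ (L:ℝ) + 1 := by
      have := Finset.mem_range.mp hj
      have : (j:ℝ) ≤ L := by exact_mod_cast (by omega : j ≤ L)
      linarith
    apply mul_le_mul_of_nonneg_right hjL (by positivity)
  have h2 : ∑ j ∈ Finset.range (L+1), (stirling n j : ℝ)/2^(j+1)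
      ≤ (1/2) * ∑ j ∈ Finset.range (L+1), (stirling n (j+1):ℝ)/2^(j+1) := by
    rw [Finset.sum_range_succ' (fun j => (stirling n j : ℝ)/2^(j+1)) L]
    rw [stirling_zero n hn]
    have he : ∀ j, (stirling n (j+1) : ℝ)/2^(j+1+1) = (1/2) * ((stirling n (j+1):ℝ)/2^(j+1)) := by
      intro j
      rw [pow_succ]
      ring
    rw [Finset.sum_congr rfl (fun j _ => he j), ← Finset.mul_sum]
    norm_num
    have : ∑ j ∈ Finset.range L, (stirling n (j+1):ℝ)/2^(j+1)
        ≤ ∑ j ∈ Finset.range (L+1), (stirling n (j+1):ℝ)/2^(j+1) := by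
      rw [Finset.sum_range_succ]
      have : (0:ℝ) ≤ (stirling n (L+1):ℝ)/2^(L+1) := by positivity
      linarith
    linarith
  have hBrange : (0:ℝ) ≤ ∑ j ∈ Finset.range (L+1), (stirling n (j+1):ℝ)/2^(j+1) :=
    Finset.sum_nonneg (fun i _ => by positivity)
  have hcast : ((L+1:ℕ):ℝ) = (L:ℝ)+1 := by push_cast; ring
  rw [hcast]
  nlinarith



private lemma B_succ_ge (n K : ℕ) (hn : 1 ≤ n) (hK : 6 ≤ K) (hKn : K ≤ n + 1)
    (hG : (K:ℝ)*((K:ℝ)-1)^n ≤ (K:ℝ)^n) :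
    (K:ℝ)/6 * B n K ≤ B (n+1) K := by
  set m := K / 2 with hmdef
  have hm3 : 3 ≤ m := by omega
  have h2m : 2*m ≤ K := by omega
  have h3m : K ≤ 3*m := by omega
  have hm1K : m - 1 < K := by omega
  set s : ℕ → ℝ := fun j => (stirling n (j+1) : ℝ)/2^(j+1) with hsdef
  have hs0 : ∀ j, 0 ≤ s j := fun j => by simp only [hsdef]; positivity
  have hc : ((m-1:ℕ):ℝ) = (m:ℝ)-1 := by
    push_cast [show 1 ≤ m from by omega]
    ring
  have hchain : ∀ d p, 1 ≤ p → p + d = m - 1 → a n p ≤ a n (m-1) := by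
    intro d
    induction d with
    | zero => intro p h1 h2; rw [show p = m - 1 from by omega]
    | succ i ih =>
      intro p h1 h2
      have hst : (K:ℝ) * a n p ≤ a n (p+1) := a_step n K p h1 (by omega) hG
      have hK1 : (1:ℝ) ≤ (K:ℝ) := by exact_mod_cast (by omega : 1 ≤ K)
      have hap : 0 < a n p := a_pos n p h1
      have hmono : a n p ≤ a n (p+1) := by nlinarith
      exact le_trans hmono (ih (p+1) (by omega) (by omega))
  have hta : ∀ j, j < m - 1 → s j ≤ a n (m-1) := by
    intro j hj
    calc s j ≤ a n (j+1) := t_le_a n (j+1) (by omega)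
      _ ≤ a n (m-1) := hchain (m-1-(j+1)) (j+1) (by omega) (by omega)
  have hsum1 : ∑ j ∈ Finset.range (m-1), s j ≤ ((m:ℝ)-1) * a n (m-1) := by
    have h := Finset.sum_le_card_nsmul (Finset.range (m-1)) s (a n (m-1))
      (fun j hj => hta j (Finset.mem_range.mp hj))
    rwa [Finset.card_range, nsmul_eq_mul, hc] at h
  have hstep : (K:ℝ) * a n (m-1) ≤ a n m := by
    have h := a_step n K (m-1) (by omega) (by omega) hG
    rwa [show m - 1 + 1 = m from by omega] at h
  have ham1 : 0 < a n (m-1) := a_pos n (m-1) (by omega)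
  have ham : 0 < a n m := a_pos n m (by omega)
  have hsum2 : ((m:ℝ)-1) * a n (m-1) ≤ (1/2) * a n m := by
    have h2m' : 2*((m:ℝ)-1) ≤ (K:ℝ) := by
      have : (2*m : ℕ) ≤ K := h2m
      have h' : (2*(m:ℝ)) ≤ (K:ℝ) := by exact_mod_cast this
      linarith
    nlinarith [mul_nonneg (sub_nonneg.mpr h2m') ham1.le]
  have h3' : 3*(m:ℝ)*((m:ℝ)-1)^n ≤ (m:ℝ)^n := by
    have h := step_ineq n K (m-1) (by omega) (by omega) hG
    rw [hc] at h
    have hK12 : (12:ℝ) ≤ 2*(K:ℝ) := by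
      have : (6:ℝ) ≤ (K:ℝ) := by exact_mod_cast hK
      linarith
    have hm1 : (0:ℝ) ≤ (m:ℝ)-1 := by
      have : (1:ℝ) ≤ (m:ℝ) := by exact_mod_cast (by omega : 1 ≤ m)
      linarith
    have hpow : (0:ℝ) ≤ ((m:ℝ)-1)^n := pow_nonneg hm1 n
    rw [show ((m:ℝ) - 1 + 1) = (m:ℝ) from by ring] at h
    nlinarith [mul_nonneg (mul_nonneg (by linarith : (0:ℝ) ≤ 2*(K:ℝ)-3) (by linarith : (0:ℝ) ≤ (m:ℝ))) hpow]
  have htm : (2/3) * a n m ≤ s (m-1) := by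
    have h := t_ge n m hn (by omega) (by omega) h3'
    simp only [hsdef]
    rwa [show m - 1 + 1 = m from by omega]
  have hBsplit : B n K = ∑ j ∈ Finset.range (m-1), s j + ∑ j ∈ Finset.Ico (m-1) K, s j := by
    rw [B_eq_range]
    exact (Finset.sum_range_add_sum_Ico s (by omega)).symm
  have hIco_nonneg : 0 ≤ ∑ j ∈ Finset.Ico (m-1) K, s j := Finset.sum_nonneg (fun j _ => hs0 j)
  have hsm1 : s (m-1) ≤ ∑ j ∈ Finset.Ico (m-1) K, s j :=
    Finset.single_le_sum (fun j _ => hs0 j) (Finset.mem_Ico.mpr ⟨le_refl _, hm1K⟩)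
  have hBle : B n K ≤ 2 * ∑ j ∈ Finset.Ico (m-1) K, s j := by
    have hmain : ∑ j ∈ Finset.range (m-1), s j ≤ ∑ j ∈ Finset.Ico (m-1) K, s j := by
      calc ∑ j ∈ Finset.range (m-1), s j ≤ ((m:ℝ)-1)*a n (m-1) := hsum1
        _ ≤ (1/2)*a n m := hsum2
        _ ≤ s (m-1) := by nlinarith [hs0 (m-1)]
        _ ≤ _ := hsm1
    linarith [hBsplit.le, hBsplit.ge]
  have hB1 : (m:ℝ) * ∑ j ∈ Finset.Ico (m-1) K, s j ≤ B (n+1) K := by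
    rw [B_eq_range]
    calc (m:ℝ) * ∑ j ∈ Finset.Ico (m-1) K, s j
        = ∑ j ∈ Finset.Ico (m-1) K, (m:ℝ) * s j := Finset.mul_sum _ _ _
      _ ≤ ∑ j ∈ Finset.Ico (m-1) K, ((j:ℝ)+1) * s j := by
          apply Finset.sum_le_sum
          intro j hj
          have hjm : m - 1 ≤ j := (Finset.mem_Ico.mp hj).1
          have hcast : (m:ℝ) ≤ (j:ℝ)+1 := by exact_mod_cast (by omega : m ≤ j + 1)
          exact mul_le_mul_of_nonneg_right hcast (hs0 j)
      _ ≤ ∑ j ∈ Finset.range K, ((j:ℝ)+1) * s j := by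
          apply Finset.sum_le_sum_of_subset_of_nonneg
          · rw [Finset.range_eq_Ico]
            exact Finset.Ico_subset_Ico (by omega) le_rfl
          · intro j _ _
            exact mul_nonneg (by positivity) (hs0 j)
      _ ≤ ∑ j ∈ Finset.range K, (stirling (n+1) (j+1):ℝ)/2^(j+1) := by
          apply Finset.sum_le_sum
          intro j _
          simp only [hsdef]
          rw [stirling_succ_succ]
          push_cast
          rw [← mul_div_assoc]
          gcongr
          linarith [show (0:ℝ) ≤ (stirling n j : ℝ) from Nat.cast_nonneg _]
  have hm0 : (0:ℝ) ≤ (m:ℝ)/2 := by positivity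
  have hA := mul_le_mul_of_nonneg_left hBle hm0
  have hm6 : (K:ℝ)/6 ≤ (m:ℝ)/2 := by
    have : (K:ℝ) ≤ 3*(m:ℝ) := by exact_mod_cast h3m
    linarith
  calc (K:ℝ)/6 * B n K ≤ (m:ℝ)/2 * B n K := mul_le_mul_of_nonneg_right hm6 (B_nonneg n K)
    _ ≤ (m:ℝ)/2 * (2 * ∑ j ∈ Finset.Ico (m-1) K, s j) := hA
    _ = (m:ℝ) * ∑ j ∈ Finset.Ico (m-1) K, s j := by ring
    _ ≤ B (n+1) K := hB1



/-- if `k_n ≤ M_n` eventually, then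
`B_{n,k_{n+1}}/B_{n+1,k_{n+1}} = Θ(1/k_{n+1})`. -/
theorem stmt_9 (M : ℕ → ℕ) (hM : IsArgmax M)
    (k : ℕ → ℕ) (hk_mono : Monotone k)
    (hk_pos : ∀ n, 1 ≤ n → 1 ≤ k n) (hk_le : ∀ n, 1 ≤ n → k n ≤ n)
    (hk_tend : Tendsto k atTop atTop)
    (hkM : ∃ N, ∀ n, N ≤ n → k n ≤ M n) :
    ∃ c C : ℝ, 0 < c ∧ 0 < C ∧ ∃ N : ℕ, ∀ n, N ≤ n →
      c / (k (n + 1) : ℝ) ≤ B n (k (n + 1)) / B (n + 1) (k (n + 1)) ∧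
      B n (k (n + 1)) / B (n + 1) (k (n + 1)) ≤ C / (k (n + 1) : ℝ) := by
  obtain ⟨N₁, hN₁⟩ := hkM
  obtain ⟨N₂, hN₂⟩ := Filter.eventually_atTop.mp (hk_tend.eventually_ge_atTop 6)
  refine ⟨2/3, 6, by norm_num, by norm_num, max (max N₁ N₂) 1, ?_⟩
  intro n hn
  have hn1 : 1 ≤ n := le_trans (le_max_right _ _) hn
  have hN1' : N₁ ≤ max (max N₁ N₂) 1 := le_trans (le_max_left _ _) (le_max_left _ _)
  have hN2' : N₂ ≤ max (max N₁ N₂) 1 := le_trans (le_max_right _ _) (le_max_left _ _)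
  set K := k (n+1) with hKdef
  have hK6 : 6 ≤ K := hN₂ (n+1) (by omega)
  have hKM : K ≤ M (n+1) := hN₁ (n+1) (by omega)
  have hKn : K ≤ n + 1 := hk_le (n+1) (by omega)
  have hG : (K:ℝ) * ((K:ℝ)-1)^n ≤ (K:ℝ)^n := key_ineq M hM n K (by omega) hKM
  have hBn := B_pos n K hn1 (by omega)
  have hBn1 := B_pos (n+1) K (by omega) (by omega)
  have hup := B_succ_le n K hn1 (by omega)
  have hlo := B_succ_ge n K hn1 hK6 hKn hG
  have hKr : (0:ℝ) < K := by exact_mod_cast (by omega : 0 < K)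
  constructor
  · rw [div_le_div_iff₀ hKr hBn1]
    nlinarith
  · rw [div_le_div_iff₀ hBn1 hKr]
    nlinarith

end CatalanSat
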